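/- arXiv:2511.05576 — 2 statements merged into one kernel-verified Lean document; each statement's English description precedes it below -/
import Mathlib

section
/- Let k be a field and B = k[z_{i,j} : 1 ≤ i ≤ r, 1 ≤ j ≤ c]/(∧²Z) the coordinate ring of rank-≤1 r×c matrices. The blow-up of Spec B along the ideal I = (z_{i,j}) is covered by rc affine charts, and for each (r,s) the chart D₊(ε_{r,s}) is isomorphic to Spec k[a₁,…,a_r, b₁,…,b_c, z_{r,s}]/(a_r − 1, b_s − 1), i.e. to affine space 𝔸_k^{r+c−1}; in particular the blow-up is smooth of dimension r + c − 1. -/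
/- STATEMENT 1: Charts of the blow-up of the rank ≤ 1 determinantal variety
`Spec B`, `B = k[z_{i,j}]/(∧²Z)`, along the ideal `I = (z_{i,j})`.
The blow-up is covered by the r·c affine charts `D₊(ε_{r₀,s₀})`; the chart at
`(r₀,s₀)` is presented by adjoining variables `ε_{i,j}` with relations
`z_{i,j} = z_{r₀,s₀}·ε_{i,j}`, `ε_{r₀,s₀} = 1`, and saturating at `z_{r₀,s₀}`.
Each such chart is isomorphic to
`Spec k[a₁,…,a_r,b₁,…,b_c,z]/(a_{r₀}-1, b_{s₀}-1) ≅ 𝔸_k^{r+c-1}`;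
in particular each chart (hence the blow-up) is smooth of dimension r+c-1. -/

open MvPolynomial

/-- The saturation of an ideal at an element, defined as the contraction of its
extension to the localization away from that element. -/
noncomputable def satAt {P : Type*} [CommRing P] (I : Ideal P) (f : P) : Ideal P :=
  (I.map (algebraMap P (Localization.Away f))).comap
    (algebraMap P (Localization.Away f))

/-!
On the chart, `z_{ij} = z ε_{ij}` with `z = z_{i₀j₀}`, and the minor built from rows `i₀, i` and
columns `j₀, j` turns into `z² (ε_{ij} - ε_{ij₀} ε_{i₀j}) = 0`. So after saturating at `z` the
`ε`'s factor as `ε_{ij} = a_i b_j` with `a_i = ε_{ij₀}`, `b_j = ε_{i₀j}`. Adding these relations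
gives an ideal `K` whose quotient is, through `z_{ij} ↦ z a_i b_j`, `ε_{ij} ↦ a_i b_j`, the
polynomial ring in `a, b, z` modulo `a_{i₀} = b_{j₀} = 1`, i.e. a polynomial ring. Hence `K` is
prime and avoids `z`; as `z²` kills each new relation modulo `I₀ ⊆ K`, `K` is the saturation of
`I₀` at `z`.
-/

section Saturation

variable {P : Type*} [CommRing P] {I K : Ideal P} {f : P}

theorem mem_satAt_iff {a : P} : a ∈ satAt I f ↔ ∃ n : ℕ, f ^ n * a ∈ I := by
  simp only [satAt, Ideal.mem_comap,
    IsLocalization.algebraMap_mem_map_algebraMap_iff (Submonoid.powers f),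
    Submonoid.mem_powers_iff, exists_exists_eq_and]

theorem le_satAt : I ≤ satAt I f :=
  Ideal.le_comap_map

theorem satAt_eq_of_isPrime (hIK : I ≤ K) (hK : K.IsPrime) (hf : f ∉ K)
    (hKI : K ≤ satAt I f) : satAt I f = K := by
  refine le_antisymm (fun a ha => ?_) hKI
  obtain ⟨n, hn⟩ := mem_satAt_iff.mp ha
  exact (hK.mem_or_mem (hIK hn)).resolve_left fun h => hf (hK.mem_of_pow_mem n h)

end Saturation

theorem Ideal.Quotient.liftₐ_mk {R A B : Type*} [CommSemiring R] [CommRing A] [Algebra R A]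
    [Semiring B] [Algebra R B] (I : Ideal A) (f : A →ₐ[R] B)
    (hI : ∀ a ∈ I, f a = 0) (a : A) :
    Ideal.Quotient.liftₐ I f hI (Ideal.Quotient.mk I a) = f a :=
  rfl

namespace MvPolynomial

variable {R σ : Type*} [CommRing R] (s : Finset σ) (v : σ → R)

theorem quotient_mk_X_eq_C {i : σ} (hi : i ∈ s) :
    Ideal.Quotient.mk (Ideal.span ((fun i => X i - C (v i)) '' (s : Set σ))) (X i) =
      Ideal.Quotient.mk _ (C (v i)) :=
  Ideal.Quotient.eq.mpr (Ideal.subset_span ⟨i, hi, rfl⟩)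

variable [DecidableEq σ]

theorem span_X_sub_C_le_ker_aeval :
    Ideal.span ((fun i => X i - C (v i)) '' (s : Set σ)) ≤
      RingHom.ker (aeval fun i => if h : i ∈ s then C (v i) else X ⟨i, h⟩ :
        MvPolynomial σ R →ₐ[R] MvPolynomial {i // i ∉ s} R) :=
  Ideal.span_le.mpr <| Set.image_subset_iff.mpr fun i hi => by simp [Finset.mem_coe.mp hi]

noncomputable def quotientSpanXSubCAlgEquiv :
    (MvPolynomial σ R ⧸ Ideal.span ((fun i => X i - C (v i)) '' (s : Set σ))) ≃ₐ[R]
      MvPolynomial {i // i ∉ s} R :=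
  AlgEquiv.ofAlgHom
    (Ideal.Quotient.liftₐ _ _ fun _ ha => RingHom.mem_ker.mp (span_X_sub_C_le_ker_aeval s v ha))
    ((Ideal.Quotient.mkₐ R _).comp (rename Subtype.val))
    (algHom_ext fun i => by
      simp only [AlgHom.comp_apply, Ideal.Quotient.mkₐ_eq_mk, rename_X, Ideal.Quotient.liftₐ_mk]
      simp [i.2])
    (Ideal.Quotient.algHom_ext R <| algHom_ext fun i => by
      simp only [AlgHom.comp_apply, Ideal.Quotient.mkₐ_eq_mk, Ideal.Quotient.liftₐ_mk]
      by_cases hi : i ∈ s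
      · simp [hi, quotient_mk_X_eq_C s v hi]
      · simp [hi])

theorem quotientSpanXSubCAlgEquiv_mk_X {i : σ} (hi : i ∉ s) :
    quotientSpanXSubCAlgEquiv s v (Ideal.Quotient.mk _ (X i)) = X ⟨i, hi⟩ := by
  simp only [quotientSpanXSubCAlgEquiv, AlgEquiv.ofAlgHom_apply, Ideal.Quotient.liftₐ_mk, aeval_X,
    dif_neg hi]

end MvPolynomial

namespace RankOneChart

variable (k : Type*) [CommRing k] {m n : Type*} (i₀ : m) (j₀ : n)

/- `X (Sum.inl p)` is `z_p` and `X (Sum.inr p)` is `ε_p`; in the target ring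
`X (Sum.inl i)`, `X (Sum.inr (Sum.inl j))`, `X (Sum.inr (Sum.inr ()))` are `a_i`, `b_j`, `z`. -/

noncomputable def chartIdeal : Ideal (MvPolynomial ((m × n) ⊕ (m × n)) k) :=
  Ideal.span {f | ∃ (i i' : m) (j j' : n),
      f = X (Sum.inl (i, j)) * X (Sum.inl (i', j'))
        - X (Sum.inl (i, j')) * X (Sum.inl (i', j))} ⊔
  Ideal.span {f | ∃ p : m × n,
      f = X (Sum.inl p) - X (Sum.inl (i₀, j₀)) * X (Sum.inr p)} ⊔
  Ideal.span {X (Sum.inr (i₀, j₀)) - 1}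

noncomputable def saturatedChartIdeal : Ideal (MvPolynomial ((m × n) ⊕ (m × n)) k) :=
  chartIdeal k i₀ j₀ ⊔ Ideal.span {f | ∃ p : m × n,
      f = X (Sum.inr p) - X (Sum.inr (p.1, j₀)) * X (Sum.inr (i₀, p.2))}

noncomputable def coordIdeal : Ideal (MvPolynomial (m ⊕ n ⊕ Unit) k) :=
  Ideal.span {X (Sum.inl i₀) - 1, X (Sum.inr (Sum.inl j₀)) - 1}

noncomputable def toCoords :
    MvPolynomial ((m × n) ⊕ (m × n)) k →ₐ[k] MvPolynomial (m ⊕ n ⊕ Unit) k :=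
  aeval <| Sum.elim
    (fun p => X (Sum.inr (Sum.inr ())) * X (Sum.inl p.1) * X (Sum.inr (Sum.inl p.2)))
    (fun p => X (Sum.inl p.1) * X (Sum.inr (Sum.inl p.2)))

noncomputable def ofCoords :
    MvPolynomial (m ⊕ n ⊕ Unit) k →ₐ[k] MvPolynomial ((m × n) ⊕ (m × n)) k :=
  aeval <| Sum.elim (fun i => X (Sum.inr (i, j₀)))
    (Sum.elim (fun j => X (Sum.inr (i₀, j))) fun _ => X (Sum.inl (i₀, j₀)))

section Relations

variable {k i₀ j₀}

theorem minor_mem_chartIdeal (i i' : m) (j j' : n) :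
    X (Sum.inl (i, j)) * X (Sum.inl (i', j')) - X (Sum.inl (i, j')) * X (Sum.inl (i', j)) ∈
      chartIdeal k i₀ j₀ :=
  Ideal.mem_sup_left <| Ideal.mem_sup_left <| Ideal.subset_span ⟨i, i', j, j', rfl⟩

theorem z_sub_mul_eps_mem_chartIdeal (p : m × n) :
    X (Sum.inl p) - X (Sum.inl (i₀, j₀)) * X (Sum.inr p) ∈ chartIdeal k i₀ j₀ :=
  Ideal.mem_sup_left <| Ideal.mem_sup_right <| Ideal.subset_span ⟨p, rfl⟩

theorem eps_sub_one_mem_chartIdeal : X (Sum.inr (i₀, j₀)) - 1 ∈ chartIdeal k i₀ j₀ :=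
  Ideal.mem_sup_right <| Ideal.subset_span rfl

theorem mk_saturatedChartIdeal_z (p : m × n) :
    Ideal.Quotient.mk (saturatedChartIdeal k i₀ j₀) (X (Sum.inl p)) =
      Ideal.Quotient.mk _ (X (Sum.inl (i₀, j₀))) * Ideal.Quotient.mk _ (X (Sum.inr p)) := by
  rw [← map_mul, Ideal.Quotient.eq]
  exact Ideal.mem_sup_left (z_sub_mul_eps_mem_chartIdeal p)

theorem mk_saturatedChartIdeal_eps₀ :
    Ideal.Quotient.mk (saturatedChartIdeal k i₀ j₀) (X (Sum.inr (i₀, j₀))) = 1 := by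
  rw [← map_one (Ideal.Quotient.mk _), Ideal.Quotient.eq]
  exact Ideal.mem_sup_left eps_sub_one_mem_chartIdeal

theorem mk_saturatedChartIdeal_eps (i : m) (j : n) :
    Ideal.Quotient.mk (saturatedChartIdeal k i₀ j₀) (X (Sum.inr (i, j))) =
      Ideal.Quotient.mk _ (X (Sum.inr (i, j₀))) * Ideal.Quotient.mk _ (X (Sum.inr (i₀, j))) := by
  rw [← map_mul, Ideal.Quotient.eq]
  exact Ideal.mem_sup_right <| Ideal.subset_span ⟨(i, j), rfl⟩

theorem mk_coordIdeal_a : Ideal.Quotient.mk (coordIdeal k i₀ j₀) (X (Sum.inl i₀)) = 1 := by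
  rw [← map_one (Ideal.Quotient.mk _), Ideal.Quotient.eq]
  exact Ideal.subset_span (Set.mem_insert _ _)

theorem mk_coordIdeal_b :
    Ideal.Quotient.mk (coordIdeal k i₀ j₀) (X (Sum.inr (Sum.inl j₀))) = 1 := by
  rw [← map_one (Ideal.Quotient.mk _), Ideal.Quotient.eq]
  exact Ideal.subset_span (Set.mem_insert_of_mem _ rfl)

end Relations

theorem saturatedChartIdeal_le_comap_toCoords :
    saturatedChartIdeal k i₀ j₀ ≤ (coordIdeal k i₀ j₀).comap (toCoords k) := by
  simp only [saturatedChartIdeal, chartIdeal, sup_le_iff, Ideal.span_le, Set.subset_def]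
  refine ⟨⟨⟨?_, ?_⟩, ?_⟩, ?_⟩
  all_goals
    rintro _ ⟨_, _, _, _, rfl⟩
    rw [SetLike.mem_coe, Ideal.mem_comap, ← Ideal.Quotient.eq_zero_iff_mem]
    simp only [toCoords, map_sub, map_mul, map_one, aeval_X, Sum.elim_inl, Sum.elim_inr,
      mk_coordIdeal_a, mk_coordIdeal_b]
    ring

theorem coordIdeal_le_comap_ofCoords :
    coordIdeal k i₀ j₀ ≤ (saturatedChartIdeal k i₀ j₀).comap (ofCoords k i₀ j₀) := by
  simp only [coordIdeal, Ideal.span_le, Set.insert_subset_iff, Set.singleton_subset_iff,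
    SetLike.mem_coe, Ideal.mem_comap]
  rw [← Ideal.Quotient.eq_zero_iff_mem, ← Ideal.Quotient.eq_zero_iff_mem]
  simp only [ofCoords, map_sub, map_one, aeval_X, Sum.elim_inl, Sum.elim_inr,
    mk_saturatedChartIdeal_eps₀, sub_self, and_self]

noncomputable def chartQuotientEquiv :
    (MvPolynomial ((m × n) ⊕ (m × n)) k ⧸ saturatedChartIdeal k i₀ j₀) ≃ₐ[k]
      MvPolynomial (m ⊕ n ⊕ Unit) k ⧸ coordIdeal k i₀ j₀ :=
  AlgEquiv.ofAlgHom
    (Ideal.quotientMapₐ _ (toCoords k) (saturatedChartIdeal_le_comap_toCoords k i₀ j₀))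
    (Ideal.quotientMapₐ _ (ofCoords k i₀ j₀) (coordIdeal_le_comap_ofCoords k i₀ j₀))
    (Ideal.Quotient.algHom_ext k <| algHom_ext fun w => by
      rcases w with i | j | _ <;>
        simp [toCoords, ofCoords, mk_coordIdeal_a, mk_coordIdeal_b])
    (Ideal.Quotient.algHom_ext k <| algHom_ext fun v => by
      rcases v with ⟨i, j⟩ | ⟨i, j⟩ <;>
        simp only [toCoords, ofCoords, AlgHom.comp_apply, Ideal.Quotient.mkₐ_eq_mk,
          Ideal.quotient_map_mkₐ, aeval_X, Sum.elim_inl, Sum.elim_inr, map_mul, AlgHom.id_apply]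
      · rw [mk_saturatedChartIdeal_z (i, j), mk_saturatedChartIdeal_eps i j, mul_assoc]
      · rw [mk_saturatedChartIdeal_eps i j])

section Coordinates

variable [DecidableEq m] [DecidableEq n]

def normalizedVars : Finset (m ⊕ n ⊕ Unit) :=
  {Sum.inl i₀, Sum.inr (Sum.inl j₀)}

theorem coordIdeal_eq_span :
    coordIdeal k i₀ j₀ = Ideal.span ((fun x => X x - C ((1 : m ⊕ n ⊕ Unit → k) x)) ''
      ↑(normalizedVars i₀ j₀)) := by
  simp [coordIdeal, normalizedVars, Set.image_insert_eq]

noncomputable def coordQuotientEquiv :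
    (MvPolynomial (m ⊕ n ⊕ Unit) k ⧸ coordIdeal k i₀ j₀) ≃ₐ[k]
      MvPolynomial {x // x ∉ normalizedVars i₀ j₀} k :=
  (Ideal.quotientEquivAlgOfEq k (coordIdeal_eq_span k i₀ j₀)).trans
    (quotientSpanXSubCAlgEquiv _ 1)

theorem coordQuotientEquiv_mk_X_inr_inr :
    coordQuotientEquiv k i₀ j₀ (Ideal.Quotient.mk _ (X (Sum.inr (Sum.inr ())))) =
      X ⟨Sum.inr (Sum.inr ()), by simp [normalizedVars]⟩ := by
  rw [coordQuotientEquiv, AlgEquiv.trans_apply, Ideal.quotientEquivAlgOfEq_mk]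
  exact quotientSpanXSubCAlgEquiv_mk_X _ _ _

theorem coordQuotientEquiv_chartQuotientEquiv_mk_X_inl :
    coordQuotientEquiv k i₀ j₀
        (chartQuotientEquiv k i₀ j₀ (Ideal.Quotient.mk _ (X (Sum.inl (i₀, j₀))))) =
      X ⟨Sum.inr (Sum.inr ()), by simp [normalizedVars]⟩ := by
  simp only [chartQuotientEquiv, AlgEquiv.ofAlgHom_apply, Ideal.quotient_map_mkₐ, toCoords,
    aeval_X, Sum.elim_inl, Ideal.Quotient.mkₐ_eq_mk, map_mul, mk_coordIdeal_a, mk_coordIdeal_b,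
    mul_one, coordQuotientEquiv_mk_X_inr_inr]

theorem card_notMem_normalizedVars [Fintype m] [Fintype n] :
    Fintype.card {x // x ∉ normalizedVars i₀ j₀} =
      Fintype.card m + Fintype.card n - 1 := by
  rw [Fintype.card_subtype_compl, Fintype.card_coe, normalizedVars, Finset.card_pair Sum.inl_ne_inr]
  simp only [Fintype.card_sum, Fintype.card_unit]
  omega

end Coordinates

theorem sq_mul_rankOneRel_mem_chartIdeal (i : m) (j : n) :
    X (Sum.inl (i₀, j₀)) ^ 2 * (X (Sum.inr (i, j)) - X (Sum.inr (i, j₀)) * X (Sum.inr (i₀, j))) ∈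
      chartIdeal k i₀ j₀ := by
  set q := Ideal.Quotient.mk (chartIdeal k i₀ j₀)
  have hz (p : m × n) : q (X (Sum.inl p)) = q (X (Sum.inl (i₀, j₀))) * q (X (Sum.inr p)) := by
    rw [← map_mul, Ideal.Quotient.eq]
    exact z_sub_mul_eps_mem_chartIdeal p
  have hminor := Ideal.Quotient.eq_zero_iff_mem.mpr
    (minor_mem_chartIdeal (k := k) (i₀ := i₀) (j₀ := j₀) i₀ i j₀ j)
  rw [← Ideal.Quotient.eq_zero_iff_mem]
  simp only [map_mul, map_sub, map_pow] at hminor ⊢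
  linear_combination hminor - q (X (Sum.inl (i₀, j₀))) * hz (i, j)
    + q (X (Sum.inl (i, j₀))) * hz (i₀, j)
    + q (X (Sum.inl (i₀, j₀))) * q (X (Sum.inr (i₀, j))) * hz (i, j₀)

theorem saturatedChartIdeal_le_satAt :
    saturatedChartIdeal k i₀ j₀ ≤ satAt (chartIdeal k i₀ j₀) (X (Sum.inl (i₀, j₀))) :=
  sup_le le_satAt <| Ideal.span_le.mpr <| by
    rintro _ ⟨⟨i, j⟩, rfl⟩
    exact mem_satAt_iff.mpr ⟨2, sq_mul_rankOneRel_mem_chartIdeal k i₀ j₀ i j⟩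

theorem X_inl_notMem_saturatedChartIdeal [Nontrivial k] :
    X (Sum.inl (i₀, j₀)) ∉ saturatedChartIdeal k i₀ j₀ := by
  classical
  intro hz
  apply X_ne_zero (R := k) (⟨Sum.inr (Sum.inr ()), by simp [normalizedVars]⟩ :
    {x // x ∉ normalizedVars i₀ j₀})
  rw [← coordQuotientEquiv_chartQuotientEquiv_mk_X_inl, Ideal.Quotient.eq_zero_iff_mem.mpr hz,
    map_zero, map_zero]

theorem saturatedChartIdeal_isPrime [IsDomain k] : (saturatedChartIdeal k i₀ j₀).IsPrime := by
  classical
  rw [← Ideal.Quotient.isDomain_iff_prime]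
  exact MulEquiv.isDomain _
    ((chartQuotientEquiv k i₀ j₀).trans (coordQuotientEquiv k i₀ j₀)).toMulEquiv

theorem satAt_chartIdeal [IsDomain k] :
    satAt (chartIdeal k i₀ j₀) (X (Sum.inl (i₀, j₀))) = saturatedChartIdeal k i₀ j₀ :=
  satAt_eq_of_isPrime le_sup_left
    (saturatedChartIdeal_isPrime k i₀ j₀) (X_inl_notMem_saturatedChartIdeal k i₀ j₀)
    (saturatedChartIdeal_le_satAt k i₀ j₀)

end RankOneChart

theorem blowup_chart_of_determinantal_general
    (k : Type) [Field k] (r c : ℕ)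
    (r₀ : Fin r) (s₀ : Fin c)
    -- the big polynomial ring: `inl p` are the `z`-variables, `inr p` the `ε`-variables
    (I₀ : Ideal (MvPolynomial ((Fin r × Fin c) ⊕ (Fin r × Fin c)) k))
    (hI₀ : I₀ =
      -- 2×2 minors of Z
      Ideal.span {f | ∃ (i i' : Fin r) (j j' : Fin c),
          f = X (Sum.inl (i, j)) * X (Sum.inl (i', j'))
            - X (Sum.inl (i, j')) * X (Sum.inl (i', j))} ⊔
      -- blow-up chart relations z_{i,j} = z_{r₀,s₀} ε_{i,j}
      Ideal.span {f | ∃ p : Fin r × Fin c,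
          f = X (Sum.inl p) - X (Sum.inl (r₀, s₀)) * X (Sum.inr p)} ⊔
      -- ε_{r₀,s₀} = 1
      Ideal.span {X (Sum.inr (r₀, s₀)) - 1})
    -- the target ring k[a₁,…,a_r,b₁,…,b_c,z]/(a_{r₀} - 1, b_{s₀} - 1)
    (J : Ideal (MvPolynomial (Fin r ⊕ Fin c ⊕ Unit) k))
    (hJ : J = Ideal.span {X (Sum.inl r₀) - 1, X (Sum.inr (Sum.inl s₀)) - 1}) :
    -- the chart D₊(ε_{r₀,s₀}) is Spec of the saturated quotient, and it is
    -- isomorphic to k[a,b,z]/(a_{r₀}-1, b_{s₀}-1), hence to 𝔸^{r+c-1}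
    Nonempty
      ((MvPolynomial ((Fin r × Fin c) ⊕ (Fin r × Fin c)) k ⧸
          satAt I₀ (X (Sum.inl (r₀, s₀)))) ≃+*
        (MvPolynomial (Fin r ⊕ Fin c ⊕ Unit) k ⧸ J)) ∧
    Nonempty
      ((MvPolynomial ((Fin r × Fin c) ⊕ (Fin r × Fin c)) k ⧸
          satAt I₀ (X (Sum.inl (r₀, s₀)))) ≃+*
        MvPolynomial (Fin (r + c - 1)) k) := by
  have hsat : satAt I₀ (X (Sum.inl (r₀, s₀))) = RankOneChart.saturatedChartIdeal k r₀ s₀ := by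
    rw [hI₀]
    exact RankOneChart.satAt_chartIdeal k r₀ s₀
  rw [hsat, hJ]
  have e := RankOneChart.chartQuotientEquiv k r₀ s₀
  refine ⟨⟨e.toRingEquiv⟩, ⟨((e.trans (RankOneChart.coordQuotientEquiv k r₀ s₀)).trans
    (renameEquiv k (Fintype.equivFinOfCardEq ?_))).toRingEquiv⟩⟩
  rw [RankOneChart.card_notMem_normalizedVars, Fintype.card_fin, Fintype.card_fin]

theorem blowup_chart_of_determinantal
    (k : Type) [Field k] (r c : ℕ) (hr : 1 ≤ r) (hc : 1 ≤ c)
    (r₀ : Fin r) (s₀ : Fin c)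
    -- the big polynomial ring: `inl p` are the `z`-variables, `inr p` the `ε`-variables
    (I₀ : Ideal (MvPolynomial ((Fin r × Fin c) ⊕ (Fin r × Fin c)) k))
    (hI₀ : I₀ =
      -- 2×2 minors of Z
      Ideal.span {f | ∃ (i i' : Fin r) (j j' : Fin c),
          f = X (Sum.inl (i, j)) * X (Sum.inl (i', j'))
            - X (Sum.inl (i, j')) * X (Sum.inl (i', j))} ⊔
      -- blow-up chart relations z_{i,j} = z_{r₀,s₀} ε_{i,j}
      Ideal.span {f | ∃ p : Fin r × Fin c,
          f = X (Sum.inl p) - X (Sum.inl (r₀, s₀)) * X (Sum.inr p)} ⊔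
      -- ε_{r₀,s₀} = 1
      Ideal.span {X (Sum.inr (r₀, s₀)) - 1})
    -- the target ring k[a₁,…,a_r,b₁,…,b_c,z]/(a_{r₀} - 1, b_{s₀} - 1)
    (J : Ideal (MvPolynomial (Fin r ⊕ Fin c ⊕ Unit) k))
    (hJ : J = Ideal.span {X (Sum.inl r₀) - 1, X (Sum.inr (Sum.inl s₀)) - 1}) :
    -- the chart D₊(ε_{r₀,s₀}) is Spec of the saturated quotient, and it is
    -- isomorphic to k[a,b,z]/(a_{r₀}-1, b_{s₀}-1), hence to 𝔸^{r+c-1}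
    Nonempty
      ((MvPolynomial ((Fin r × Fin c) ⊕ (Fin r × Fin c)) k ⧸
          satAt I₀ (X (Sum.inl (r₀, s₀)))) ≃+*
        (MvPolynomial (Fin r ⊕ Fin c ⊕ Unit) k ⧸ J)) ∧
    Nonempty
      ((MvPolynomial ((Fin r × Fin c) ⊕ (Fin r × Fin c)) k ⧸
          satAt I₀ (X (Sum.inl (r₀, s₀)))) ≃+*
        MvPolynomial (Fin (r + c - 1)) k) :=
  blowup_chart_of_determinantal_general k r c r₀ s₀ I₀ hI₀ J hJ
end

section
/- Let O be a discrete valuation ring with uniformizer π, residue field k of characteristic ≠ 2, and let R = O[V₁, T₂, v, t, z]/(vt − π, zv·q(T₂) − 2π, z(z·q(T₂) − 2t)) where V₁ is a tuple of free variables, T₂ = (t₁,…,t_m) and q(T₂) = T₂^t H T₂ = Σ t_i t_{m+1−i} for H the unit anti-diagonal matrix. Then the flat closure of Spec R over O (i.e. Spec R modulo its π-power torsion ideal) equals Spec O[V₁, T₂, v, z]/(zv·q(T₂) − 2π), where t is eliminated via the relation 2t = z·q(T₂) (valid after inverting structure considerations on the flat locus). -/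
/-!
Substituting `t ↦ zq/2` maps the naive chart onto `O[V₁, T₂, v, z]/(zvq - 2π)`, and the inclusion
of the latter is a section of it. Modulo `vt = π` and `zvq = 2π` one has `π (zq/2 - t) = 0`, so
the kernel of the substitution is π-power torsion. Conversely `π` is a nonzerodivisor on the
target: `π` stays prime in the polynomial ring and does not divide `zvq - 2π`, because `q` is
nonzero modulo `π` (it takes the value 1 or 2 at a suitable point, and 2 is a unit). Hence the
kernel is exactly the π-power torsion.
-/

open MvPolynomial

/-- The ideal of elements killed by a power of `p`. -/
def powerTorsion {R : Type*} [CommRing R] (p : R) : Ideal R where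
  carrier := {x | ∃ n : ℕ, p ^ n * x = 0}
  zero_mem' := ⟨0, by simp⟩
  add_mem' := by
    rintro a b ⟨n, ha⟩ ⟨m, hb⟩
    refine ⟨n + m, ?_⟩
    have h : p ^ (n + m) * (a + b) = p ^ m * (p ^ n * a) + p ^ n * (p ^ m * b) := by
      ring
    rw [h, ha, hb, mul_zero, mul_zero, add_zero]
  smul_mem' := by
    rintro c x ⟨n, hx⟩
    refine ⟨n, ?_⟩
    have h : p ^ n * (c • x) = c * (p ^ n * x) := by
      simp [smul_eq_mul]; ring
    rw [h, hx, mul_zero]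

section PowerTorsion

variable {A B : Type*} [CommRing A] [CommRing B] {p : A}

theorem powerTorsion_le_ker (F : A →+* B) (hp : F p ∈ nonZeroDivisors B) :
    powerTorsion p ≤ RingHom.ker F := by
  rintro x ⟨n, hx⟩
  have hFx : F p ^ n * F x = 0 := by rw [← map_pow, ← map_mul, hx, map_zero]
  exact (mul_left_mem_nonZeroDivisors_eq_zero_iff (pow_mem hp n)).mp hFx

theorem ker_le_powerTorsion (F : A →+* B) (G : B →+* A)
    (hGF : ∀ x, Ideal.Quotient.mk (powerTorsion p) (G (F x)) = Ideal.Quotient.mk _ x) :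
    RingHom.ker F ≤ powerTorsion p := by
  intro x hx
  rw [← Ideal.Quotient.eq_zero_iff_mem, ← hGF, RingHom.mem_ker.mp hx, map_zero, map_zero]

noncomputable def RingHom.quotientPowerTorsionEquivOfRightInverse (F : A →+* B) (G : B →+* A)
    (hFG : Function.RightInverse G F) (hp : F p ∈ nonZeroDivisors B)
    (hGF : ∀ x, Ideal.Quotient.mk (powerTorsion p) (G (F x)) = Ideal.Quotient.mk _ x) :
    A ⧸ powerTorsion p ≃+* B :=
  (Ideal.quotEquivOfEq (le_antisymm (powerTorsion_le_ker F hp) (ker_le_powerTorsion F G hGF))).trans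
    (F.quotientKerEquivOfRightInverse hFG)

end PowerTorsion

theorem Prime.mk_mem_nonZeroDivisors_quotient_span_singleton {S : Type*} [CommRing S] [IsDomain S]
    {p g : S} (hp : Prime p) (hg : ¬ p ∣ g) :
    Ideal.Quotient.mk (Ideal.span {g}) p ∈ nonZeroDivisors (S ⧸ Ideal.span {g}) := by
  rw [mem_nonZeroDivisors_iff_left]
  intro x hx
  obtain ⟨y, rfl⟩ := Ideal.Quotient.mk_surjective x
  rw [← map_mul, Ideal.Quotient.eq_zero_iff_mem, Ideal.mem_span_singleton'] at hx
  obtain ⟨h, hh⟩ := hx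
  obtain ⟨h', rfl⟩ := (hp.dvd_or_dvd ⟨y, hh⟩).resolve_right hg
  rw [Ideal.Quotient.eq_zero_iff_mem, Ideal.mem_span_singleton']
  exact ⟨h', mul_left_cancel₀ hp.ne_zero (by rw [← hh]; ring)⟩

noncomputable section Chart

variable {O σ : Type*} [CommRing O]

-- The variables `v, t, z` are `X (inr 0), X (inr 1), X (inr 2)`; in `flatChartIdeal`, `v, z` are
-- `X (inr 0), X (inr 1)`.
def naiveChartIdeal (π : O) (q : MvPolynomial σ O) : Ideal (MvPolynomial (σ ⊕ Fin 3) O) :=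
  Ideal.span
    { X (Sum.inr 0) * X (Sum.inr 1) - C π,
      X (Sum.inr 2) * X (Sum.inr 0) * rename Sum.inl q - C (2 * π),
      X (Sum.inr 2) * (X (Sum.inr 2) * rename Sum.inl q - 2 * X (Sum.inr 1)) }

def flatChartIdeal (π : O) (q : MvPolynomial σ O) : Ideal (MvPolynomial (σ ⊕ Fin 2) O) :=
  Ideal.span {X (Sum.inr 1) * X (Sum.inr 0) * rename Sum.inl q - C (2 * π)}

variable (π : O) (q : MvPolynomial σ O)

theorem v_mul_t_sub_mem_naiveChartIdeal :
    X (Sum.inr 0) * X (Sum.inr 1) - C π ∈ naiveChartIdeal π q :=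
  Ideal.subset_span (Set.mem_insert _ _)

theorem z_mul_v_mul_q_sub_mem_naiveChartIdeal :
    X (Sum.inr 2) * X (Sum.inr 0) * rename Sum.inl q - C (2 * π) ∈ naiveChartIdeal π q :=
  Ideal.subset_span (Set.mem_insert_of_mem _ (Set.mem_insert _ _))

abbrev NaiveChart := MvPolynomial (σ ⊕ Fin 3) O ⧸ naiveChartIdeal π q

abbrev FlatChart := MvPolynomial (σ ⊕ Fin 2) O ⧸ flatChartIdeal π q

def flatChartToNaive : FlatChart π q →ₐ[O] NaiveChart π q :=
  Ideal.quotientMapₐ _ (rename (Sum.map id ![0, 2])) <| by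
    refine Ideal.span_le.mpr (Set.singleton_subset_iff.mpr ?_)
    convert z_mul_v_mul_q_sub_mem_naiveChartIdeal π q using 2
    simp [rename_rename]
    rfl

theorem C_invOf_two_mul_two {τ : Type*} [Invertible (2 : O)] :
    (C ⅟2 * 2 : MvPolynomial τ O) = 1 := by
  rw [← map_ofNat C 2, ← map_mul, invOf_mul_self, map_one]

def eliminateT [Invertible (2 : O)] :
    MvPolynomial (σ ⊕ Fin 3) O →ₐ[O] MvPolynomial (σ ⊕ Fin 2) O :=
  aeval (Sum.elim (X ∘ Sum.inl)
    ![X (Sum.inr 0), C ⅟2 * X (Sum.inr 1) * rename Sum.inl q, X (Sum.inr 1)])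

theorem eliminateT_rename_inl [Invertible (2 : O)] :
    eliminateT q (rename Sum.inl q) = rename Sum.inl q := by
  rw [eliminateT, aeval_rename, Sum.elim_comp_inl, ← rename_eq_aeval]

def naiveChartToFlat [Invertible (2 : O)] : NaiveChart π q →ₐ[O] FlatChart π q :=
  Ideal.quotientMapₐ _ (eliminateT q) <| by
    simp only [naiveChartIdeal, Ideal.span_le, Set.insert_subset_iff, Set.singleton_subset_iff,
      SetLike.mem_coe, Ideal.mem_comap, flatChartIdeal, Ideal.mem_span_singleton', map_sub,
      map_mul, map_ofNat, eliminateT_rename_inl]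
    simp only [eliminateT, aeval_X, aeval_C, algebraMap_eq, Sum.elim_inr, Matrix.cons_val_zero,
      Matrix.cons_val_one, Matrix.cons_val_two, Matrix.head_cons, Matrix.tail_cons]
    refine ⟨⟨C ⅟2, ?_⟩, ⟨1, by simp⟩, ⟨0, ?_⟩⟩
    · linear_combination (-C π) * C_invOf_two_mul_two (O := O)
    · linear_combination
        (X (Sum.inr 1) * X (Sum.inr 1) * rename Sum.inl q) * C_invOf_two_mul_two (O := O)

theorem flatChartToNaive_mk (p : MvPolynomial (σ ⊕ Fin 2) O) :
    flatChartToNaive π q (Ideal.Quotient.mk _ p) =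
      Ideal.Quotient.mk _ (rename (Sum.map id ![0, 2]) p) :=
  rfl

theorem naiveChartToFlat_mk [Invertible (2 : O)] (p : MvPolynomial (σ ⊕ Fin 3) O) :
    naiveChartToFlat π q (Ideal.Quotient.mk _ p) = Ideal.Quotient.mk _ (eliminateT q p) :=
  rfl

theorem naiveChartToFlat_comp_flatChartToNaive [Invertible (2 : O)] :
    (naiveChartToFlat π q).comp (flatChartToNaive π q) = AlgHom.id O _ := by
  apply Ideal.Quotient.algHom_ext
  apply MvPolynomial.algHom_ext
  rintro (s | i)
  · simp [naiveChartToFlat_mk, flatChartToNaive_mk, eliminateT]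
  · fin_cases i <;> simp [naiveChartToFlat_mk, flatChartToNaive_mk, eliminateT]

theorem half_z_mul_q_sub_t_mem_powerTorsion [Invertible (2 : O)] :
    Ideal.Quotient.mk _ (C ⅟2 * X (Sum.inr 2) * rename Sum.inl q - X (Sum.inr 1)) ∈
      powerTorsion (algebraMap O (NaiveChart π q) π) := by
  refine ⟨1, ?_⟩
  rw [pow_one, ← Ideal.Quotient.mk_algebraMap, ← map_mul, Ideal.Quotient.eq_zero_iff_mem]
  convert Ideal.sub_mem _
    (Ideal.mul_mem_left _ (C ⅟2 * X (Sum.inr 1)) (z_mul_v_mul_q_sub_mem_naiveChartIdeal π q))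
    (Ideal.mul_mem_left _ (C ⅟2 * X (Sum.inr 2) * rename Sum.inl q)
      (v_mul_t_sub_mem_naiveChartIdeal π q)) using 1
  simp only [algebraMap_eq, map_mul, map_ofNat]
  linear_combination (C π * X (Sum.inr 1)) * C_invOf_two_mul_two (O := O)

theorem flatChartToNaive_comp_naiveChartToFlat_modPowerTorsion [Invertible (2 : O)] :
    (Ideal.Quotient.mkₐ O (powerTorsion (algebraMap O (NaiveChart π q) π))).comp
        ((flatChartToNaive π q).comp (naiveChartToFlat π q)) =
      Ideal.Quotient.mkₐ O _ := by
  apply Ideal.Quotient.algHom_ext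
  apply MvPolynomial.algHom_ext
  rintro (s | i)
  · simp [naiveChartToFlat_mk, flatChartToNaive_mk, eliminateT]
  · fin_cases i
    · simp [naiveChartToFlat_mk, flatChartToNaive_mk, eliminateT]
    · simp only [AlgHom.comp_apply, Ideal.Quotient.mkₐ_eq_mk, naiveChartToFlat_mk,
        flatChartToNaive_mk, eliminateT]
      rw [Ideal.Quotient.eq, ← map_sub]
      convert half_z_mul_q_sub_t_mem_powerTorsion π q using 3
      · simp [rename_rename]
        rfl
      · rfl
    · simp [naiveChartToFlat_mk, flatChartToNaive_mk, eliminateT]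

theorem not_C_dvd_flatChart_relation {π : O} (hπ : Prime π) {q : MvPolynomial σ O}
    (hq : ¬ C π ∣ q) :
    ¬ C π ∣ (X (Sum.inr 1) * X (Sum.inr 0) * rename Sum.inl q - C (2 * π) :
      MvPolynomial (σ ⊕ Fin 2) O) := by
  have hCπ : Prime (C π : MvPolynomial (σ ⊕ Fin 2) O) := (prime_C_iff _).mpr hπ
  have not_dvd_X : ∀ i, ¬ C π ∣ (X i : MvPolynomial (σ ⊕ Fin 2) O) := fun i h =>
    hπ.not_isUnit (isUnit_of_dvd_one (by simpa using map_dvd (eval 1) h))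
  rw [dvd_sub_left (map_dvd C (dvd_mul_left π 2))]
  rintro h
  rcases hCπ.dvd_or_dvd h with h | h
  · rcases hCπ.dvd_or_dvd h with h | h <;> exact not_dvd_X _ h
  · apply hq
    have h' := map_dvd (aeval (Sum.elim X 0 : σ ⊕ Fin 2 → MvPolynomial σ O)) h
    rwa [aeval_C, algebraMap_eq, aeval_rename, Sum.elim_comp_inl, aeval_X_left_apply] at h'

theorem algebraMap_mem_nonZeroDivisors_flatChart [IsDomain O] (hπ : Prime π)
    (hq : ¬ C π ∣ q) :
    algebraMap O (FlatChart π q) π ∈ nonZeroDivisors (FlatChart π q) :=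
  ((prime_C_iff _).mpr hπ).mk_mem_nonZeroDivisors_quotient_span_singleton
    (not_C_dvd_flatChart_relation hπ hq)

def naiveChartFlatClosureEquiv [IsDomain O] [Invertible (2 : O)] (hπ : Prime π)
    (hq : ¬ C π ∣ q) :
    NaiveChart π q ⧸ powerTorsion (algebraMap O (NaiveChart π q) π) ≃+* FlatChart π q :=
  RingHom.quotientPowerTorsionEquivOfRightInverse (naiveChartToFlat π q).toRingHom
    (flatChartToNaive π q).toRingHom
    (AlgHom.congr_fun (naiveChartToFlat_comp_flatChartToNaive π q))
    (by simpa using algebraMap_mem_nonZeroDivisors_flatChart π q hπ hq)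
    (AlgHom.congr_fun (flatChartToNaive_comp_naiveChartToFlat_modPowerTorsion π q))

end Chart

-- The witness is the indicator of `{0, rev 0}`, on which the form takes the value 1 or 2.
theorem exists_isUnit_sum_mul_rev {R : Type*} [CommRing R] (h2 : IsUnit (2 : R)) (m : ℕ)
    [NeZero m] : ∃ f : Fin m → R, IsUnit (∑ i, f i * f i.rev) := by
  classical
  let s : Finset (Fin m) := {0, Fin.rev 0}
  have hs : ∀ i : Fin m, i.rev ∈ s ↔ i ∈ s := by
    intro i
    simp only [s, Finset.mem_insert, Finset.mem_singleton, Fin.rev_eq_iff, Fin.rev_rev]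
    tauto
  refine ⟨fun i => if i ∈ s then 1 else 0, ?_⟩
  simp only [hs, ← ite_and, and_self, Finset.sum_boole, mul_ite, mul_one, mul_zero,
    Finset.filter_mem_eq_inter, Finset.univ_inter]
  by_cases h : (0 : Fin m) = Fin.rev 0
  · simp [s, ← h]
  · simpa [s, Finset.card_pair h] using h2

theorem not_C_dvd_sum_X_mul_X_rev {O τ : Type*} [CommRing O] {π : O} (hπ : ¬ IsUnit π)
    (h2 : IsUnit (2 : O)) (m : ℕ) [NeZero m] :
    ¬ C π ∣ (∑ i : Fin m, X (Sum.inr i) * X (Sum.inr i.rev) :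
      MvPolynomial (τ ⊕ Fin m) O) := by
  obtain ⟨f, hf⟩ := exists_isUnit_sum_mul_rev h2 m
  intro h
  have h' := map_dvd (eval (Sum.elim 0 f)) h
  simp only [eval_C, map_sum, map_mul, eval_X, Sum.elim_inr] at h'
  exact hπ (isUnit_of_dvd_unit h' hf)

theorem flat_closure_case1_chart
    (O : Type) [CommRing O] [IsDomain O] [IsDiscreteValuationRing O]
    (π : O) (hπ : Irreducible π) (h2 : IsUnit (2 : O))
    (a m : ℕ) (hm : 1 ≤ m)
    -- variables: V₁ = inl (inl i), T₂ = inl (inr i), v = inr 0, t = inr 1, z = inr 2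
    (q : MvPolynomial ((Fin a ⊕ Fin m) ⊕ Fin 3) O)
    (hq : q = ∑ i : Fin m, X (Sum.inl (Sum.inr i)) * X (Sum.inl (Sum.inr i.rev)))
    (I : Ideal (MvPolynomial ((Fin a ⊕ Fin m) ⊕ Fin 3) O))
    (hI : I = Ideal.span
      { X (Sum.inr 0) * X (Sum.inr 1) - C π,
        X (Sum.inr 2) * X (Sum.inr 0) * q - C (2 * π),
        X (Sum.inr 2) * (X (Sum.inr 2) * q - 2 * X (Sum.inr 1)) })
    -- the target ring O[V₁, T₂, v, z]/(z·v·q - 2π)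
    (q' : MvPolynomial ((Fin a ⊕ Fin m) ⊕ Fin 2) O)
    (hq' : q' = ∑ i : Fin m, X (Sum.inl (Sum.inr i)) * X (Sum.inl (Sum.inr i.rev)))
    (I' : Ideal (MvPolynomial ((Fin a ⊕ Fin m) ⊕ Fin 2) O))
    (hI' : I' = Ideal.span
      { X (Sum.inr 1) * X (Sum.inr 0) * q' - C (2 * π) }) :
    Nonempty
      (((MvPolynomial ((Fin a ⊕ Fin m) ⊕ Fin 3) O ⧸ I) ⧸
          powerTorsion (algebraMap O (MvPolynomial ((Fin a ⊕ Fin m) ⊕ Fin 3) O ⧸ I) π)) ≃+*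
        (MvPolynomial ((Fin a ⊕ Fin m) ⊕ Fin 2) O ⧸ I')) := by
  have : NeZero m := ⟨by omega⟩
  have : Invertible (2 : O) := h2.invertible
  let q₀ : MvPolynomial (Fin a ⊕ Fin m) O := ∑ i : Fin m, X (Sum.inr i) * X (Sum.inr i.rev)
  have hq₀ : ∀ k, (rename Sum.inl q₀ : MvPolynomial ((Fin a ⊕ Fin m) ⊕ Fin k) O) =
      ∑ i : Fin m, X (Sum.inl (Sum.inr i)) * X (Sum.inl (Sum.inr i.rev)) := by
    simp [q₀]
  obtain rfl : I = naiveChartIdeal π q₀ := by rw [hI, hq, naiveChartIdeal, hq₀]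
  obtain rfl : I' = flatChartIdeal π q₀ := by rw [hI', hq', flatChartIdeal, hq₀]
  exact ⟨naiveChartFlatClosureEquiv π q₀ hπ.prime (not_C_dvd_sum_X_mul_X_rev hπ.not_isUnit h2 m)⟩
end
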